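/- Let d ∈ ℕ, B ∈ ℝ^{d×d} a Frolov matrix and a > 0. The transformed randomized Frolov quadrature M̃_{a,B} is well-defined and unbiased on L¹([0,1]^d): for every f ∈ L¹([0,1]^d), M̃_{a,B}(f) is almost surely finite and E(M̃_{a,B}(f)) = ∫_{[0,1]^d} f(x) dx. -/

import Mathlib

open MeasureTheory Matrix Real Set
open scoped ENNReal NNReal
noncomputable section

/-- integer lattice point as a real vector -/
def zvec {d : ℕ} (m : Fin d → ℤ) : Fin d → ℝ := fun j => (m j : ℝ)

/-- The quadrature rule `Q_{S,v}(f) = |det S|⁻¹ ∑_{m ∈ ℤᵈ} f (S⁻ᵀ (m + v))`. -/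
def Qrule {d : ℕ} (S : Matrix (Fin d) (Fin d) ℝ) (v : Fin d → ℝ)
    (f : (Fin d → ℝ) → ℝ) : ℝ :=
  |S.det|⁻¹ * ∑' m : Fin d → ℤ, f ((Sᵀ)⁻¹ *ᵥ (zvec m + v))

/-- A Frolov matrix. -/
def IsFrolov {d : ℕ} (B : Matrix (Fin d) (Fin d) ℝ) : Prop :=
  IsUnit B.det ∧
  (∀ m : Fin d → ℤ, m ≠ 0 → 1 ≤ |∏ j, (B *ᵥ zvec m) j|) ∧
  (∀ x y : Fin d → ℝ,
    {m : Fin d → ℤ | ∀ j, (B *ᵥ zvec m) j ∈ Set.uIcc (x j) (y j)}.Finite ∧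
    ({m : Fin d → ℤ | ∀ j, (B *ᵥ zvec m) j ∈ Set.uIcc (x j) (y j)}.ncard : ℝ)
      ≤ (∏ j, |x j - y j|) + 1)

/-- the unit cube `[0,1]^d` -/
def unitCube (d : ℕ) : Set (Fin d → ℝ) := Set.univ.pi fun _ => Set.Icc 0 1

/-- the box `[1, 2^{1/d}]^d` for the dilation parameter -/
def uBox (d : ℕ) : Set (Fin d → ℝ) := Set.univ.pi fun _ => Set.Icc 1 (2 ^ ((1 : ℝ) / d))

/-- uniform probability measure on a set -/
def unif {d : ℕ} (s : Set (Fin d → ℝ)) : Measure (Fin d → ℝ) :=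
  (volume s)⁻¹ • volume.restrict s

/-- joint distribution of the random dilation `u` and the random shift `v` -/
def Pmeas (d : ℕ) : Measure ((Fin d → ℝ) × (Fin d → ℝ)) :=
  (unif (uBox d)).prod (unif (unitCube d))

/-- the random matrix `a ū B` of the randomized Frolov rule -/
def Mmat {d : ℕ} (a : ℝ) (B : Matrix (Fin d) (Fin d) ℝ) (u : Fin d → ℝ) :
    Matrix (Fin d) (Fin d) ℝ :=
  a • (Matrix.diagonal u * B)

/-- the Fourier transform `f̂(y) = ∫ f(x) e^{-2πi⟨x,y⟩} dx` -/
def ft {d : ℕ} (f : (Fin d → ℝ) → ℝ) (y : Fin d → ℝ) : ℂ :=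
  ∫ x : Fin d → ℝ, (f x : ℂ) *
    Complex.exp (-2 * (π : ℂ) * Complex.I * ((∑ j, x j * y j : ℝ) : ℂ))

/-- `D_a = {x : ∏ |x_j| ≥ a^d}` -/
def Da (d : ℕ) (a : ℝ) : Set (Fin d → ℝ) := {x | a ^ d ≤ ∏ j, |x j|}

/-- partial derivative in the `i`-th coordinate -/
def pd {d : ℕ} (i : Fin d) (f : (Fin d → ℝ) → ℝ) : (Fin d → ℝ) → ℝ :=
  fun x => deriv (fun t => f (Function.update x i t)) (x i)

/-- the mixed partial derivative `D^α f` for a multi-index `α` -/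
def Dmulti {d : ℕ} (α : Fin d → ℕ) (f : (Fin d → ℝ) → ℝ) : (Fin d → ℝ) → ℝ :=
  (List.finRange d).foldr (fun i g => (pd i)^[α i] g) f

/-- multi-indices `α ∈ {0,…,r}^d` -/
def mixIdx (d r : ℕ) : Finset (Fin d → ℕ) := Fintype.piFinset fun _ => Finset.range (r + 1)

/-- multi-indices `α ∈ ℕ₀^d` with `‖α‖₁ ≤ s` -/
def isoIdx (d s : ℕ) : Finset (Fin d → ℕ) :=
  (Fintype.piFinset fun _ => Finset.range (s + 1)).filter fun α => ∑ j, α j ≤ s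

/-- the weight `h_r(x) = ∏_j ∑_{k=0}^r |2πx_j|^{2k}` -/
def hwt (d r : ℕ) (x : Fin d → ℝ) : ℝ :=
  ∏ j, ∑ k ∈ Finset.range (r + 1), |2 * π * x j| ^ (2 * k)

/-- the weight `v_s(x) = ∑_{‖α‖₁ ≤ s} ∏_j |2πx_j|^{2α_j}` -/
def vwt (d s : ℕ) (x : Fin d → ℝ) : ℝ :=
  ∑ α ∈ isoIdx d s, ∏ j, |2 * π * x j| ^ (2 * α j)

/-- the `H^{r,mix}(ℝ^d)` norm, in its Fourier-analytic form -/
def mixNormF (d r : ℕ) (f : (Fin d → ℝ) → ℝ) : ℝ :=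
  Real.sqrt (∫ x : Fin d → ℝ, ‖ft f x‖ ^ 2 * hwt d r x)

/-- the `H^s(ℝ^d)` norm, in its Fourier-analytic form -/
def isoNormF (d s : ℕ) (f : (Fin d → ℝ) → ℝ) : ℝ :=
  Real.sqrt (∫ x : Fin d → ℝ, ‖ft f x‖ ^ 2 * vwt d s x)

/-- the `H^{r,mix}([0,1]^d)` norm -/
def mixNormC (d r : ℕ) (f : (Fin d → ℝ) → ℝ) : ℝ :=
  Real.sqrt (∑ α ∈ mixIdx d r, ∫ x in unitCube d, (Dmulti α f x) ^ 2)

/-- the `H^s([0,1]^d)` norm -/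
def isoNormC (d s : ℕ) (f : (Fin d → ℝ) → ℝ) : ℝ :=
  Real.sqrt (∑ α ∈ isoIdx d s, ∫ x in unitCube d, (Dmulti α f x) ^ 2)

/-- the coordinatewise transformation `Ψ` -/
def PsiMap (ψ : ℝ → ℝ) {d : ℕ} (x : Fin d → ℝ) : Fin d → ℝ := fun j => ψ (x j)

/-- the Jacobian `|DΨ(x)| = ∏_j ψ'(x_j)` -/
def DPsi (ψ : ℝ → ℝ) {d : ℕ} (x : Fin d → ℝ) : ℝ := ∏ j, deriv ψ (x j)

/-- the transformed quadrature rule `Q̃_{S,v}` -/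
def Qt (ψ : ℝ → ℝ) {d : ℕ} (S : Matrix (Fin d) (Fin d) ℝ) (v : Fin d → ℝ)
    (f : (Fin d → ℝ) → ℝ) : ℝ :=
  |S.det|⁻¹ * ∑' m : Fin d → ℤ,
    f (PsiMap ψ ((Sᵀ)⁻¹ *ᵥ (zvec m + v))) * DPsi ψ ((Sᵀ)⁻¹ *ᵥ (zvec m + v))

/-- the standing assumptions on the transformation `ψ` -/
def IsPsi (ψ : ℝ → ℝ) : Prop :=
  ContDiff ℝ (⊤ : ℕ∞) ψ ∧ (∀ x < (0 : ℝ), ψ x = 0) ∧ (∀ x > (1 : ℝ), ψ x = 1) ∧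
  Set.BijOn ψ (Set.Ioo 0 1) (Set.Ioo 0 1) ∧
  ∀ x ∈ Set.Ioo (0 : ℝ) 1, deriv ψ x ≠ 0


section helpers
variable {d : ℕ}

variable {ψ : ℝ → ℝ}

lemma psi_deriv_cont (hψ : IsPsi ψ) : Continuous (deriv ψ) :=
  hψ.1.continuous_deriv (by simp)

lemma psi_deriv_zero (hψ : IsPsi ψ) {t : ℝ} (ht : t ∉ Ioo (0:ℝ) 1) : deriv ψ t = 0 := by
  have hlt : ∀ s : ℝ, s < 0 → deriv ψ s = 0 := by
    intro s hs
    have h0 : ψ =ᶠ[nhds s] fun _ => (0:ℝ) := by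
      filter_upwards [Iio_mem_nhds hs] with y hy using hψ.2.1 y hy
    rw [h0.deriv_eq, deriv_const]
  have hgt : ∀ s : ℝ, 1 < s → deriv ψ s = 0 := by
    intro s hs
    have h0 : ψ =ᶠ[nhds s] fun _ => (1:ℝ) := by
      filter_upwards [Ioi_mem_nhds hs] with y hy using hψ.2.2.1 y hy
    rw [h0.deriv_eq, deriv_const]
  simp only [mem_Ioo, not_and_or, not_lt] at ht
  rcases ht with ht | ht
  · rcases lt_or_eq_of_le ht with h | h
    · exact hlt t h
    · -- t = 0
      subst h
      have h1 : Filter.Tendsto (deriv ψ) (nhdsWithin 0 (Iio 0)) (nhds (deriv ψ 0)) :=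
        ((psi_deriv_cont hψ).tendsto 0).mono_left nhdsWithin_le_nhds
      have h2 : Filter.Tendsto (deriv ψ) (nhdsWithin 0 (Iio 0)) (nhds 0) := by
        apply Filter.Tendsto.congr' _ tendsto_const_nhds
        filter_upwards [self_mem_nhdsWithin] with y hy using (hlt y hy).symm
      exact tendsto_nhds_unique h1 h2
  · rcases lt_or_eq_of_le ht with h | h
    · exact hgt t h
    · subst h
      have h1 : Filter.Tendsto (deriv ψ) (nhdsWithin 1 (Ioi 1)) (nhds (deriv ψ 1)) :=
        ((psi_deriv_cont hψ).tendsto 1).mono_left nhdsWithin_le_nhds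
      have h2 : Filter.Tendsto (deriv ψ) (nhdsWithin 1 (Ioi 1)) (nhds 0) := by
        apply Filter.Tendsto.congr' _ tendsto_const_nhds
        filter_upwards [self_mem_nhdsWithin] with y hy using (hgt y hy).symm
      exact tendsto_nhds_unique h1 h2

lemma psi_zero (hψ : IsPsi ψ) : ψ 0 = 0 := by
  have h1 : Filter.Tendsto ψ (nhdsWithin 0 (Iio 0)) (nhds (ψ 0)) :=
    (hψ.1.continuous.tendsto 0).mono_left nhdsWithin_le_nhds
  have h2 : Filter.Tendsto ψ (nhdsWithin 0 (Iio 0)) (nhds 0) := by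
    apply Filter.Tendsto.congr' _ tendsto_const_nhds
    filter_upwards [self_mem_nhdsWithin] with y hy using (hψ.2.1 y hy).symm
  exact tendsto_nhds_unique h1 h2

lemma psi_deriv_pos (hψ : IsPsi ψ) {t : ℝ} (ht : t ∈ Ioo (0:ℝ) 1) : 0 < deriv ψ t := by
  rcases lt_or_ge 0 (deriv ψ t) with h | h
  · exact h
  have hneg : ∀ s ∈ Ioo (0:ℝ) 1, deriv ψ s < 0 := by
    intro s hs
    rcases lt_or_ge (deriv ψ s) 0 with h' | h'
    · exact h'
    -- deriv ψ s > 0 (nonzero) and deriv ψ t < 0 : IVT gives a zero between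
    exfalso
    have hs' : 0 < deriv ψ s := lt_of_le_of_ne h' (Ne.symm (hψ.2.2.2.2 s hs))
    have ht' : deriv ψ t < 0 := lt_of_le_of_ne h (hψ.2.2.2.2 t ht)
    have : (0:ℝ) ∈ Set.uIcc (deriv ψ t) (deriv ψ s) := by
      rw [Set.mem_uIcc]; left; exact ⟨le_of_lt ht', le_of_lt hs'⟩
    obtain ⟨z, hz, hz0⟩ := intermediate_value_uIcc ((psi_deriv_cont hψ).continuousOn) this
    have hzI : z ∈ Ioo (0:ℝ) 1 := by
      exact Set.ordConnected_Ioo.uIcc_subset ht hs hz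
    exact hψ.2.2.2.2 z hzI hz0
  -- so ψ strictly anti on Icc 0 1, contradiction with ψ t ∈ (0,1), ψ 0 = 0
  exfalso
  have hanti : StrictAntiOn ψ (Icc (0:ℝ) 1) := by
    apply strictAntiOn_of_deriv_neg (convex_Icc 0 1) hψ.1.continuous.continuousOn
    intro x hx
    rw [interior_Icc] at hx
    exact hneg x hx
  have h1 : ψ t < ψ 0 := hanti (by constructor <;> norm_num) ⟨le_of_lt ht.1, le_of_lt ht.2⟩ ht.1
  rw [psi_zero hψ] at h1
  exact absurd (hψ.2.2.2.1.mapsTo ht).1 (not_lt.2 (le_of_lt h1))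

def openCube (d : ℕ) : Set (Fin d → ℝ) := Set.univ.pi fun _ => Set.Ioo 0 1

/-- derivative of PsiMap -/
def DerD (ψ : ℝ → ℝ) {d : ℕ} (x : Fin d → ℝ) : (Fin d → ℝ) →L[ℝ] (Fin d → ℝ) :=
  ContinuousLinearMap.pi fun j => deriv ψ (x j) • ContinuousLinearMap.proj j

lemma hasFDeriv_psiMap (hψ : IsPsi ψ) (x : Fin d → ℝ) :
    HasFDerivAt (PsiMap ψ) (DerD ψ x) x := by
  apply hasFDerivAt_pi.2
  intro j
  exact ((hψ.1.differentiable (by simp) (x j)).hasDerivAt).comp_hasFDerivAt x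
    (hasFDerivAt_apply j x)

lemma derD_det (ψ : ℝ → ℝ) (x : Fin d → ℝ) :
    (DerD ψ x).det = ∏ j, deriv ψ (x j) := by
  have h : ((DerD ψ x) : (Fin d → ℝ) →ₗ[ℝ] (Fin d → ℝ)) =
      Matrix.toLin' (Matrix.diagonal fun j => deriv ψ (x j)) := by
    apply LinearMap.ext; intro v; funext j
    simp [DerD, Matrix.toLin'_apply, Matrix.mulVec_diagonal, smul_eq_mul,
      ContinuousLinearMap.pi_apply, mul_comm]
  rw [ContinuousLinearMap.det, h, LinearMap.det_toLin', Matrix.det_diagonal]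

lemma psiMap_image (hψ : IsPsi ψ) : PsiMap ψ '' openCube d = openCube d := by
  ext y
  constructor
  · rintro ⟨x, hx, rfl⟩ j _
    exact hψ.2.2.2.1.mapsTo (hx j trivial)
  · intro hy
    have : ∀ j, ∃ t ∈ Ioo (0:ℝ) 1, ψ t = y j := fun j => hψ.2.2.2.1.surjOn (hy j trivial)
    choose t ht hty using this
    exact ⟨t, fun j _ => ht j, funext fun j => hty j⟩

lemma psiMap_injOn (hψ : IsPsi ψ) : Set.InjOn (PsiMap ψ) (openCube d) := by
  intro x hx y hy hxy
  funext j
  exact hψ.2.2.2.1.injOn (hx j trivial) (hy j trivial) (congrFun hxy j)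

lemma dpsi_zero_off (hψ : IsPsi ψ) {x : Fin d → ℝ} (hx : x ∉ openCube d) : DPsi ψ x = 0 := by
  simp only [openCube, Set.mem_pi, Set.mem_univ, forall_true_left, not_forall] at hx
  obtain ⟨j, hj⟩ := hx
  exact Finset.prod_eq_zero (Finset.mem_univ j) (psi_deriv_zero hψ hj)

lemma dpsi_eq_abs_det (hψ : IsPsi ψ) {x : Fin d → ℝ} (hx : x ∈ openCube d) :
    |(DerD ψ x).det| = DPsi ψ x := by
  rw [derD_det, DPsi, abs_of_nonneg]
  exact Finset.prod_nonneg fun j _ => le_of_lt (psi_deriv_pos hψ (hx j trivial))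

lemma indicator_g (hψ : IsPsi ψ) (f : (Fin d → ℝ) → ℝ) :
    (fun t => f (PsiMap ψ t) * DPsi ψ t) =
      (openCube d).indicator (fun t => f (PsiMap ψ t) * DPsi ψ t) := by
  funext t
  by_cases ht : t ∈ openCube d
  · rw [Set.indicator_of_mem ht]
  · rw [Set.indicator_of_notMem ht, dpsi_zero_off hψ ht, mul_zero]

lemma openCube_ae_unitCube : (openCube d : Set (Fin d → ℝ)) =ᵐ[volume] unitCube d := by
  rw [show (volume : Measure (Fin d → ℝ)) = Measure.pi fun _ => volume from volume_pi]
  exact MeasureTheory.Measure.pi_Ioo_ae_eq_pi_Icc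

lemma change_var (hψ : IsPsi ψ) (f : (Fin d → ℝ) → ℝ) (hf : IntegrableOn f (unitCube d)) :
    Integrable (fun t => f (PsiMap ψ t) * DPsi ψ t) volume ∧
    (∫ t, f (PsiMap ψ t) * DPsi ψ t) = ∫ x in unitCube d, f x := by
  have hs : MeasurableSet (openCube d) :=
    MeasurableSet.univ_pi fun _ => measurableSet_Ioo
  have hder : ∀ x ∈ openCube d, HasFDerivWithinAt (PsiMap ψ) (DerD ψ x) (openCube d) x :=
    fun x _ => (hasFDeriv_psiMap hψ x).hasFDerivWithinAt
  have hinj := psiMap_injOn (d := d) hψ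
  have hfoc : IntegrableOn f (openCube d) := by
    apply hf.mono_set
    intro x hx j _
    exact Ioo_subset_Icc_self (hx j trivial)
  have hiff := integrableOn_image_iff_integrableOn_abs_det_fderiv_smul volume hs hder hinj f
  rw [psiMap_image hψ] at hiff
  have hint2 : IntegrableOn (fun x => |(DerD ψ x).det| • f (PsiMap ψ x)) (openCube d) :=
    hiff.1 hfoc
  have hcong : ∀ x ∈ openCube d,
      |(DerD ψ x).det| • f (PsiMap ψ x) = f (PsiMap ψ x) * DPsi ψ x := by
    intro x hx
    rw [smul_eq_mul, dpsi_eq_abs_det hψ hx, mul_comm]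
  have hgoc : IntegrableOn (fun t => f (PsiMap ψ t) * DPsi ψ t) (openCube d) := by
    apply hint2.congr_fun hcong hs
  have hgind := hgoc.integrable_indicator hs
  rw [← indicator_g hψ f] at hgind
  refine ⟨hgind, ?_⟩
  have h1 : (∫ t, f (PsiMap ψ t) * DPsi ψ t) = ∫ t in openCube d, f (PsiMap ψ t) * DPsi ψ t := by
    conv_lhs => rw [indicator_g hψ f]
    exact integral_indicator hs
  have h2 := integral_image_eq_integral_abs_det_fderiv_smul volume hs hder hinj f
  rw [psiMap_image hψ] at h2
  rw [h1, ← setIntegral_congr_fun hs hcong, ← h2]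
  exact setIntegral_congr_set openCube_ae_unitCube

abbrev zlat (d : ℕ) : AddSubgroup (Fin d → ℝ) :=
  (Submodule.span ℤ (Set.range (Pi.basisFun ℝ (Fin d)))).toAddSubgroup

lemma zvec_mem_lat (m : Fin d → ℤ) : zvec m ∈ zlat d := by
  rw [Submodule.mem_toAddSubgroup, Module.Basis.mem_span_iff_repr_mem]
  intro i
  simp only [Pi.basisFun_repr]
  exact ⟨m i, by simp [zvec]⟩

def latEquiv (d : ℕ) : (Fin d → ℤ) ≃ zlat d :=
  Equiv.ofBijective (fun m => ⟨zvec m, zvec_mem_lat m⟩)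
    (by
      constructor
      · intro m m' h
        funext j
        have h2 := congrArg (fun z : zlat d => (z : Fin d → ℝ) j) h
        simp only [zvec] at h2
        exact_mod_cast h2
      · rintro ⟨x, hx⟩
        rw [Submodule.mem_toAddSubgroup, Module.Basis.mem_span_iff_repr_mem] at hx
        simp only [Pi.basisFun_repr] at hx
        choose m hm using hx
        exact ⟨m, by apply Subtype.ext; funext j; simpa [zvec] using hm j⟩)

instance : Countable (zlat d) := Countable.of_equiv _ (latEquiv d)

lemma fd_eq : ZSpan.fundamentalDomain (Pi.basisFun ℝ (Fin d)) =
    Set.univ.pi fun _ => Ico (0:ℝ) 1 := by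
  ext x
  simp [ZSpan.fundamentalDomain, Pi.basisFun_repr]

lemma fd_ae : (ZSpan.fundamentalDomain (Pi.basisFun ℝ (Fin d)) : Set (Fin d → ℝ))
    =ᵐ[volume] unitCube d := by
  rw [fd_eq]
  rw [show (volume : Measure (Fin d → ℝ)) = Measure.pi fun _ => volume from volume_pi]
  exact MeasureTheory.Measure.pi_Ico_ae_eq_pi_Icc

lemma lattice_lintegral (h : (Fin d → ℝ) → ℝ≥0∞) :
    ∫⁻ x, h x = ∑' m : Fin d → ℤ, ∫⁻ v in unitCube d, h (zvec m + v) := by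
  have hFD := (ZSpan.isAddFundamentalDomain' (Pi.basisFun ℝ (Fin d)) volume)
  rw [hFD.lintegral_eq_tsum'' h, ← (latEquiv d).tsum_eq]
  apply tsum_congr
  intro m
  rw [setLIntegral_congr fd_ae]
  rfl

lemma lattice_integral (h : (Fin d → ℝ) → ℝ) (hh : Integrable h volume) :
    ∫ x, h x = ∑' m : Fin d → ℤ, ∫ v in unitCube d, h (zvec m + v) := by
  have hFD := (ZSpan.isAddFundamentalDomain' (Pi.basisFun ℝ (Fin d)) volume)
  rw [hFD.integral_eq_tsum'' h hh, ← (latEquiv d).tsum_eq]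
  apply tsum_congr
  intro m
  rw [setIntegral_congr_set fd_ae]
  rfl

lemma continuous_mmatT (a : ℝ) (B : Matrix (Fin d) (Fin d) ℝ) :
    Continuous (fun u : Fin d → ℝ => (Mmat a B u)ᵀ) := by
  apply continuous_matrix
  intro i j
  simp only [Mmat, Matrix.transpose_apply, Matrix.smul_apply, Matrix.diagonal_mul, smul_eq_mul]
  fun_prop

lemma measurable_phi (a : ℝ) (B : Matrix (Fin d) (Fin d) ℝ) (m : Fin d → ℤ) :
    Measurable (fun p : (Fin d → ℝ) × (Fin d → ℝ) =>
      ((Mmat a B p.1)ᵀ)⁻¹ *ᵥ (zvec m + p.2)) := by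
  apply measurable_pi_lambda
  intro i
  have hinv : ∀ u : Fin d → ℝ, ∀ k, ((Mmat a B u)ᵀ)⁻¹ i k =
      ((Mmat a B u)ᵀ.det)⁻¹ * (Mmat a B u)ᵀ.adjugate i k := by
    intro u k
    rw [Matrix.inv_def, Ring.inverse_eq_inv', Matrix.smul_apply, smul_eq_mul]
  simp only [Matrix.mulVec, dotProduct, Pi.add_apply]
  apply Finset.measurable_sum
  intro k _
  apply Measurable.mul
  · simp only [hinv]
    apply Measurable.mul
    · apply Measurable.inv
      exact (((continuous_mmatT a B).matrix_det).measurable).comp measurable_fst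
    · exact (((continuous_apply k).comp ((continuous_apply i).comp
        ((continuous_mmatT a B).matrix_adjugate))).measurable).comp measurable_fst
  · exact measurable_const.add ((measurable_pi_apply k).comp measurable_snd)

lemma mmat_det (a : ℝ) (B : Matrix (Fin d) (Fin d) ℝ) (u : Fin d → ℝ) :
    (Mmat a B u).det = a ^ d * (∏ j, u j) * B.det := by
  rw [Mmat, Matrix.det_smul, Matrix.det_mul, Matrix.det_diagonal]
  simp [Fintype.card_fin, mul_assoc]

lemma lintegral_mulVec (T : Matrix (Fin d) (Fin d) ℝ) (hT : T.det ≠ 0)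
    {H : (Fin d → ℝ) → ℝ≥0∞} (hH : AEMeasurable H (volume : Measure (Fin d → ℝ))) :
    ∫⁻ y, H (T *ᵥ y) = ENNReal.ofReal |T.det|⁻¹ * ∫⁻ x, H x := by
  have hmap := Real.map_matrix_volume_pi_eq_smul_volume_pi (M := T) hT
  have h1 : AEMeasurable H (Measure.map (Matrix.toLin' T) volume) := by
    rw [hmap]; exact hH.smul_measure _
  have h0 : ∫⁻ y, H (T *ᵥ y) = ∫⁻ y, H ((Matrix.toLin' T) y) := by
    simp only [Matrix.toLin'_apply]
  rw [h0, ← lintegral_map' h1 (Measurable.aemeasurable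
    ((Matrix.toLin' T).continuous_of_finiteDimensional.measurable)),
    hmap, lintegral_smul_measure, abs_inv, smul_eq_mul]

lemma integrable_mulVec (T : Matrix (Fin d) (Fin d) ℝ) (hT : T.det ≠ 0)
    {h : (Fin d → ℝ) → ℝ} (hh : Integrable h (volume : Measure (Fin d → ℝ))) :
    Integrable (fun y => h (T *ᵥ y)) volume := by
  have hmap := Real.map_matrix_volume_pi_eq_smul_volume_pi (M := T) hT
  have h2 : Integrable h (Measure.map (Matrix.toLin' T) volume) := by
    rw [hmap]
    exact hh.smul_measure (by simp)
  have h3 := (integrable_map_measure (by rw [hmap]; exact hh.1.smul_measure _)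
    (Measurable.aemeasurable ((Matrix.toLin' T).continuous_of_finiteDimensional.measurable))).1 h2
  have h0 : (fun y : Fin d → ℝ => h (T *ᵥ y)) = h ∘ (Matrix.toLin' T) := by
    funext y; simp [Matrix.toLin'_apply]
  rw [h0]; exact h3

lemma integral_mulVec (T : Matrix (Fin d) (Fin d) ℝ) (hT : T.det ≠ 0)
    {h : (Fin d → ℝ) → ℝ} (hh : Integrable h (volume : Measure (Fin d → ℝ))) :
    ∫ y, h (T *ᵥ y) = |T.det|⁻¹ * ∫ x, h x := by
  have hmap := Real.map_matrix_volume_pi_eq_smul_volume_pi (M := T) hT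
  have h0 : ∫ y, h (T *ᵥ y) = ∫ y, h ((Matrix.toLin' T) y) := by
    simp only [Matrix.toLin'_apply]
  rw [h0, ← integral_map (Measurable.aemeasurable
    ((Matrix.toLin' T).continuous_of_finiteDimensional.measurable))
    (by rw [hmap]; exact hh.1.smul_measure _),
    hmap, integral_smul_measure, ENNReal.toReal_ofReal (by positivity), abs_inv,
    smul_eq_mul]

lemma two_rpow_gt (hd : 0 < d) : (1:ℝ) < 2 ^ ((1:ℝ)/d) := by
  rw [Real.one_lt_rpow_iff_of_pos two_pos]
  exact Or.inl ⟨by norm_num, div_pos one_pos (by exact_mod_cast hd)⟩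

lemma two_rpow_pow (hd : 0 < d) : ((2:ℝ) ^ ((1:ℝ)/d)) ^ d = 2 := by
  rw [← Real.rpow_natCast ((2:ℝ) ^ ((1:ℝ)/d)) d, ← Real.rpow_mul (by norm_num)]
  rw [one_div, inv_mul_cancel₀ (by exact_mod_cast hd.ne'), Real.rpow_one]

lemma vol_unitCube : volume (unitCube d) = 1 := by
  rw [unitCube, volume_pi_pi]
  simp [Real.volume_Icc]

lemma vol_uBox : volume (uBox d) =
    (ENNReal.ofReal ((2:ℝ) ^ ((1:ℝ)/d) - 1)) ^ d := by
  rw [uBox, volume_pi_pi]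
  simp [Real.volume_Icc]

lemma vol_uBox_ne_zero (hd : 0 < d) : volume (uBox d) ≠ 0 := by
  rw [vol_uBox]
  apply pow_ne_zero
  simp only [ne_eq, ENNReal.ofReal_eq_zero, not_le]
  linarith [two_rpow_gt hd]

lemma vol_uBox_ne_top : volume (uBox d) ≠ ⊤ := by
  rw [vol_uBox]
  exact ENNReal.pow_ne_top ENNReal.ofReal_ne_top

lemma unif_unitCube : unif (unitCube d) = volume.restrict (unitCube d) := by
  rw [unif, vol_unitCube]
  simp

lemma isProb_unif {s : Set (Fin d → ℝ)} (h0 : volume s ≠ 0) (ht : volume s ≠ ⊤) :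
    IsProbabilityMeasure (unif s) := by
  constructor
  rw [unif, Measure.smul_apply, Measure.restrict_apply_univ, smul_eq_mul,
    ENNReal.inv_mul_cancel h0 ht]

lemma ae_unif_of_ae_restrict {s : Set (Fin d → ℝ)} {p : (Fin d → ℝ) → Prop}
    (h : ∀ᵐ x ∂volume.restrict s, p x) : ∀ᵐ x ∂unif s, p x := by
  rw [ae_iff] at h ⊢
  rw [unif, Measure.smul_apply, h, smul_zero]

-- unif_ac via calc
lemma unif_ac {s : Set (Fin d → ℝ)} : unif s ≪ (volume : Measure (Fin d → ℝ)) :=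
  (Measure.absolutelyContinuous_of_le (Measure.restrict_le_self)).smul_left _

-- affine map is quasi measure preserving from restricted volume
lemma qmp_affine (T : Matrix (Fin d) (Fin d) ℝ) (hT : T.det ≠ 0) (c : Fin d → ℝ)
    (s : Set (Fin d → ℝ)) :
    Measure.QuasiMeasurePreserving (fun v : Fin d → ℝ => T *ᵥ (c + v))
      (volume.restrict s) volume := by
  have hmeas : Measurable (fun v : Fin d → ℝ => T *ᵥ (c + v)) := by
    have h1 : Measurable (fun v : Fin d → ℝ => c + v) := measurable_const.add measurable_id
    exact ((Matrix.toLin' T).continuous_of_finiteDimensional.measurable).comp h1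
  refine ⟨hmeas, ?_⟩
  refine Measure.AbsolutelyContinuous.mk ?_
  intro N hN hN0
  rw [Measure.map_apply hmeas hN]
  have hmap : volume.map (fun v : Fin d → ℝ => T *ᵥ (c + v))
      = ENNReal.ofReal |T.det⁻¹| • volume := by
    have hco : (fun v : Fin d → ℝ => T *ᵥ (c + v))
        = (Matrix.toLin' T) ∘ (fun v => c + v) := by
      funext v; simp [Matrix.toLin'_apply]
    rw [hco, ← Measure.map_map
      ((Matrix.toLin' T).continuous_of_finiteDimensional.measurable)
      (show Measurable fun v : Fin d → ℝ => c + v by fun_prop),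
      (measurePreserving_add_left volume c).map_eq]
    exact Real.map_matrix_volume_pi_eq_smul_volume_pi hT
  have h2 : volume ((fun v : Fin d → ℝ => T *ᵥ (c + v)) ⁻¹' N) = 0 := by
    rw [← Measure.map_apply hmeas hN, hmap]
    simp [hN0]
  exact le_antisymm ((Measure.restrict_apply_le _ _).trans h2.le) zero_le

lemma master_lintegral (T : Matrix (Fin d) (Fin d) ℝ) (hT : T.det ≠ 0)
    {g : (Fin d → ℝ) → ℝ} (hg : Integrable g volume) :
    ∫⁻ v in unitCube d, ∑' m : Fin d → ℤ, (‖g (T *ᵥ (zvec m + v))‖₊ : ℝ≥0∞) ∂volume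
      = ENNReal.ofReal |T.det|⁻¹ * ∫⁻ x, ‖g x‖₊ := by
  have haem : ∀ m : Fin d → ℤ, AEMeasurable (fun v => (‖g (T *ᵥ (zvec m + v))‖₊ : ℝ≥0∞))
      (volume.restrict (unitCube d)) :=
    fun m => (hg.1.enorm).comp_quasiMeasurePreserving (qmp_affine T hT (zvec m) _)
  rw [lintegral_tsum haem,
    ← lattice_lintegral (fun y => (‖g (T *ᵥ y)‖₊ : ℝ≥0∞))]
  exact lintegral_mulVec T hT hg.1.enorm

lemma master_integral (T : Matrix (Fin d) (Fin d) ℝ) (hT : T.det ≠ 0)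
    {g : (Fin d → ℝ) → ℝ} (hg : Integrable g volume) :
    ∫ v in unitCube d, (∑' m : Fin d → ℤ, g (T *ᵥ (zvec m + v))) ∂volume
      = |T.det|⁻¹ * ∫ x, g x := by
  have haesm : ∀ m : Fin d → ℤ, AEStronglyMeasurable (fun v => g (T *ᵥ (zvec m + v)))
      (volume.restrict (unitCube d)) :=
    fun m => hg.1.comp_quasiMeasurePreserving (qmp_affine T hT (zvec m) _)
  rw [integral_tsum haesm (by
    rw [← lattice_lintegral (fun y => ‖g (T *ᵥ y)‖ₑ),
      lintegral_mulVec T hT hg.1.enorm]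
    exact ENNReal.mul_ne_top ENNReal.ofReal_ne_top hg.2.ne),
    ← lattice_integral (fun y => g (T *ᵥ y)) (integrable_mulVec T hT hg)]
  exact integral_mulVec T hT hg

end helpers

/-- Lemma 6: the transformed randomized Frolov quadrature
`M̃_{a,B}` is well-defined and unbiased on `L¹([0,1]^d)`. -/
theorem stmt10 (d : ℕ) (hd : 0 < d) (B : Matrix (Fin d) (Fin d) ℝ) (hB : IsFrolov B)
    (ψ : ℝ → ℝ) (hψ : IsPsi ψ) (a : ℝ) (ha : 0 < a)
    (f : (Fin d → ℝ) → ℝ) (hf : IntegrableOn f (unitCube d)) :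
    (∀ᵐ p ∂Pmeas d, Summable fun m : Fin d → ℤ =>
      f (PsiMap ψ (((Mmat a B p.1)ᵀ)⁻¹ *ᵥ (zvec m + p.2))) *
        DPsi ψ (((Mmat a B p.1)ᵀ)⁻¹ *ᵥ (zvec m + p.2))) ∧
    (∫ p, Qt ψ (Mmat a B p.1) p.2 f ∂Pmeas d) = ∫ x in unitCube d, f x := by
  classical
  -- the transplanted integrand
  set g : (Fin d → ℝ) → ℝ := fun t => f (PsiMap ψ t) * DPsi ψ t with hg_def
  obtain ⟨hg, hgint⟩ := change_var hψ f hf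
  have hBdet : B.det ≠ 0 := hB.1.ne_zero
  haveI hPcube : IsProbabilityMeasure (unif (unitCube d)) :=
    isProb_unif (by rw [vol_unitCube]; exact one_ne_zero) (by rw [vol_unitCube]; exact ENNReal.one_ne_top)
  haveI hPbox : IsProbabilityMeasure (unif (uBox d)) :=
    isProb_unif (vol_uBox_ne_zero hd) vol_uBox_ne_top
  -- facts for u in the box
  have hmemBox : ∀ᵐ u ∂unif (uBox d), u ∈ uBox d :=
    ae_unif_of_ae_restrict (ae_restrict_mem (MeasurableSet.univ_pi fun _ => measurableSet_Icc))
  have huBox : ∀ u ∈ uBox d, (Mmat a B u).det ≠ 0 ∧ |(Mmat a B u).det| ≤ a^d * 2 * |B.det| := by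
    intro u hu
    have h1 : ∀ j, 1 ≤ u j := fun j => (hu j trivial).1
    have hup : ∀ j, u j ≤ 2 ^ ((1:ℝ)/d) := fun j => (hu j trivial).2
    have hppos : (0:ℝ) < ∏ j, u j :=
      Finset.prod_pos fun j _ => lt_of_lt_of_le one_pos (h1 j)
    have hple : (∏ j, u j) ≤ 2 := by
      calc (∏ j, u j) ≤ ∏ _j : Fin d, (2:ℝ) ^ ((1:ℝ)/d) :=
            Finset.prod_le_prod (fun j _ => le_trans zero_le_one (h1 j)) (fun j _ => hup j)
        _ = ((2:ℝ) ^ ((1:ℝ)/d)) ^ d := by rw [Finset.prod_const, Finset.card_univ, Fintype.card_fin]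
        _ = 2 := two_rpow_pow hd
    constructor
    · rw [mmat_det]
      exact mul_ne_zero (mul_ne_zero (pow_ne_zero _ ha.ne') hppos.ne') hBdet
    · rw [mmat_det, abs_mul, abs_mul, abs_of_pos (pow_pos ha d), abs_of_pos hppos]
      have : a ^ d * (∏ j, u j) ≤ a ^ d * 2 :=
        mul_le_mul_of_nonneg_left hple (le_of_lt (pow_pos ha d))
      exact mul_le_mul_of_nonneg_right this (abs_nonneg _)
  have hTdet : ∀ u : Fin d → ℝ, (Mmat a B u).det ≠ 0 →
      (((Mmat a B u)ᵀ)⁻¹).det = ((Mmat a B u).det)⁻¹ ∧ (((Mmat a B u)ᵀ)⁻¹).det ≠ 0 := by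
    intro u hu
    have h1 : (((Mmat a B u)ᵀ)⁻¹).det = ((Mmat a B u).det)⁻¹ := by
      rw [Matrix.det_nonsing_inv, Matrix.det_transpose, Ring.inverse_eq_inv']
    exact ⟨h1, by rw [h1]; exact inv_ne_zero hu⟩
  -- quasi measure preserving of the lattice point maps
  have hqmp : ∀ m : Fin d → ℤ, Measure.QuasiMeasurePreserving
      (fun p : (Fin d → ℝ) × (Fin d → ℝ) => ((Mmat a B p.1)ᵀ)⁻¹ *ᵥ (zvec m + p.2))
      (Pmeas d) volume := by
    intro m
    refine ⟨measurable_phi a B m, Measure.AbsolutelyContinuous.mk ?_⟩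
    intro N hN hN0
    rw [Measure.map_apply (measurable_phi a B m) hN, Pmeas,
      Measure.prod_apply ((measurable_phi a B m) hN)]
    have hz : ∀ᵐ u ∂unif (uBox d),
        (unif (unitCube d)) (Prod.mk u ⁻¹'
          ((fun p : (Fin d → ℝ) × (Fin d → ℝ) => ((Mmat a B p.1)ᵀ)⁻¹ *ᵥ (zvec m + p.2)) ⁻¹' N)) = 0 := by
      filter_upwards [hmemBox] with u hu
      have hdet := (hTdet u (huBox u hu).1).2
      have hqa := qmp_affine (((Mmat a B u)ᵀ)⁻¹) hdet (zvec m) (unitCube d)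
      have : Prod.mk u ⁻¹'
          ((fun p : (Fin d → ℝ) × (Fin d → ℝ) => ((Mmat a B p.1)ᵀ)⁻¹ *ᵥ (zvec m + p.2)) ⁻¹' N)
          = (fun v : Fin d → ℝ => ((Mmat a B u)ᵀ)⁻¹ *ᵥ (zvec m + v)) ⁻¹' N := rfl
      rw [this, unif_unitCube, ← Measure.map_apply hqa.measurable hN]
      exact hqa.absolutelyContinuous hN0
    calc ∫⁻ u, (unif (unitCube d)) (Prod.mk u ⁻¹'
          ((fun p : (Fin d → ℝ) × (Fin d → ℝ) => ((Mmat a B p.1)ᵀ)⁻¹ *ᵥ (zvec m + p.2)) ⁻¹' N))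
          ∂unif (uBox d)
        = ∫⁻ _u, 0 ∂unif (uBox d) := lintegral_congr_ae hz
      _ = 0 := lintegral_zero
  -- a.e. strong measurability of each summand on the product space
  have hterm_aesm : ∀ m : Fin d → ℤ, AEStronglyMeasurable
      (fun p : (Fin d → ℝ) × (Fin d → ℝ) => g (((Mmat a B p.1)ᵀ)⁻¹ *ᵥ (zvec m + p.2)))
      (Pmeas d) := fun m => hg.1.comp_quasiMeasurePreserving (hqmp m)
  -- the dominating function
  set A : (Fin d → ℝ) × (Fin d → ℝ) → ℝ≥0∞ :=
    fun p => ∑' m : Fin d → ℤ, (‖g (((Mmat a B p.1)ᵀ)⁻¹ *ᵥ (zvec m + p.2))‖₊ : ℝ≥0∞) with hA_def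
  have hA_meas : AEMeasurable A (Pmeas d) :=
    AEMeasurable.ennreal_tsum fun m => (hterm_aesm m).enorm
  set I : ℝ≥0∞ := ∫⁻ x, ‖g x‖₊ with hI_def
  have hI_ne : I ≠ ⊤ := hg.2.ne
  -- inner integral of A
  have hA_inner : ∀ u ∈ uBox d,
      ∫⁻ v, A (u, v) ∂unif (unitCube d) = ENNReal.ofReal |(Mmat a B u).det| * I := by
    intro u hu
    rw [unif_unitCube]
    have h1 := master_lintegral (((Mmat a B u)ᵀ)⁻¹) (hTdet u (huBox u hu).1).2 hg
    rw [hA_def]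
    rw [h1, (hTdet u (huBox u hu).1).1, abs_inv, inv_inv]
  have hA_lint : ∫⁻ p, A p ∂Pmeas d ≤ ENNReal.ofReal (a^d * 2 * |B.det|) * I := by
    rw [Pmeas, lintegral_prod A hA_meas]
    have hb : ∀ᵐ u ∂unif (uBox d),
        (∫⁻ v, A (u, v) ∂unif (unitCube d)) ≤ ENNReal.ofReal (a^d * 2 * |B.det|) * I := by
      filter_upwards [hmemBox] with u hu
      rw [hA_inner u hu]
      exact mul_le_mul_left (ENNReal.ofReal_le_ofReal (huBox u hu).2) I
    calc ∫⁻ u, (∫⁻ v, A (u, v) ∂unif (unitCube d)) ∂unif (uBox d)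
        ≤ ∫⁻ _u, ENNReal.ofReal (a^d * 2 * |B.det|) * I ∂unif (uBox d) := lintegral_mono_ae hb
      _ = ENNReal.ofReal (a^d * 2 * |B.det|) * I := by
          rw [lintegral_const, measure_univ, mul_one]
  have hA_fin : ∀ᵐ p ∂Pmeas d, A p < ⊤ :=
    ae_lt_top' hA_meas (lt_of_le_of_lt hA_lint (ENNReal.mul_lt_top ENNReal.ofReal_lt_top hI_ne.lt_top)).ne
  -- summability a.e.
  have hsummable : ∀ᵐ p ∂Pmeas d, Summable
      (fun m : Fin d → ℤ => g (((Mmat a B p.1)ᵀ)⁻¹ *ᵥ (zvec m + p.2))) := by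
    filter_upwards [hA_fin] with p hp
    apply Summable.of_nnnorm
    rw [← ENNReal.tsum_coe_ne_top_iff_summable]
    exact hp.ne
  refine ⟨hsummable, ?_⟩
  -- measurability of the full quadrature
  have hc_meas : Measurable (fun u : Fin d → ℝ => |(Mmat a B u).det|⁻¹) := by
    have h1 : Continuous (fun u : Fin d → ℝ => |((Mmat a B u)ᵀ).det|) :=
      ((continuous_mmatT a B).matrix_det).abs
    have h2 : (fun u : Fin d → ℝ => |(Mmat a B u).det|) = fun u => |((Mmat a B u)ᵀ).det| := by
      funext u; rw [Matrix.det_transpose]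
    rw [show (fun u : Fin d → ℝ => |(Mmat a B u).det|⁻¹)
      = fun u => (|(Mmat a B u).det|)⁻¹ from rfl]
    exact measurable_inv.comp (h2 ▸ h1.measurable)
  have htsum_aesm : AEStronglyMeasurable
      (fun p : (Fin d → ℝ) × (Fin d → ℝ) =>
        ∑' m : Fin d → ℤ, g (((Mmat a B p.1)ᵀ)⁻¹ *ᵥ (zvec m + p.2))) (Pmeas d) := by
    refine aestronglyMeasurable_of_tendsto_ae (Filter.atTop : Filter (Finset (Fin d → ℤ)))
      (f := fun (s : Finset (Fin d → ℤ)) (p : (Fin d → ℝ) × (Fin d → ℝ)) =>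
        ∑ m ∈ s, g (((Mmat a B p.1)ᵀ)⁻¹ *ᵥ (zvec m + p.2))) ?_ ?_
    · intro s
      exact Finset.aestronglyMeasurable_fun_sum s fun m _ => hterm_aesm m
    · filter_upwards [hsummable] with p hp using hp.hasSum
  have hQ_aesm : AEStronglyMeasurable
      (fun p : (Fin d → ℝ) × (Fin d → ℝ) => Qt ψ (Mmat a B p.1) p.2 f) (Pmeas d) := by
    have := ((hc_meas.comp measurable_fst).aestronglyMeasurable).mul htsum_aesm
    exact this
  -- finite integral
  have hQ_bound : ∀ᵐ p ∂Pmeas d, (‖Qt ψ (Mmat a B p.1) p.2 f‖₊ : ℝ≥0∞)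
      ≤ ENNReal.ofReal |(Mmat a B p.1).det|⁻¹ * A p := by
    filter_upwards [hA_fin] with p hp
    have hsum_nn : Summable (fun m : Fin d → ℤ =>
        ‖g (((Mmat a B p.1)ᵀ)⁻¹ *ᵥ (zvec m + p.2))‖₊) :=
      ENNReal.tsum_coe_ne_top_iff_summable.1 hp.ne
    have h1 : (‖Qt ψ (Mmat a B p.1) p.2 f‖₊ : ℝ≥0∞)
        = (‖|(Mmat a B p.1).det|⁻¹‖₊ : ℝ≥0∞) *
          (‖∑' m : Fin d → ℤ, g (((Mmat a B p.1)ᵀ)⁻¹ *ᵥ (zvec m + p.2))‖₊ : ℝ≥0∞) := by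
      rw [Qt, nnnorm_mul, ENNReal.coe_mul]
    rw [h1]
    have h2 : (‖|(Mmat a B p.1).det|⁻¹‖₊ : ℝ≥0∞) = ENNReal.ofReal |(Mmat a B p.1).det|⁻¹ := by
      exact Real.enorm_eq_ofReal (by positivity)
    rw [h2]
    apply mul_le_mul_right
    calc (‖∑' m : Fin d → ℤ, g (((Mmat a B p.1)ᵀ)⁻¹ *ᵥ (zvec m + p.2))‖₊ : ℝ≥0∞)
        ≤ ((∑' m : Fin d → ℤ, ‖g (((Mmat a B p.1)ᵀ)⁻¹ *ᵥ (zvec m + p.2))‖₊ : ℝ≥0) : ℝ≥0∞) :=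
          ENNReal.coe_le_coe.2 (nnnorm_tsum_le hsum_nn)
      _ = A p := by rw [hA_def, ENNReal.coe_tsum hsum_nn]
  have hQ_fin : HasFiniteIntegral
      (fun p : (Fin d → ℝ) × (Fin d → ℝ) => Qt ψ (Mmat a B p.1) p.2 f) (Pmeas d) := by
    rw [HasFiniteIntegral]
    calc ∫⁻ p, (‖Qt ψ (Mmat a B p.1) p.2 f‖₊ : ℝ≥0∞) ∂Pmeas d
        ≤ ∫⁻ p, ENNReal.ofReal |(Mmat a B p.1).det|⁻¹ * A p ∂Pmeas d := lintegral_mono_ae hQ_bound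
      _ = ∫⁻ u, ∫⁻ v, ENNReal.ofReal |(Mmat a B u).det|⁻¹ * A (u, v)
            ∂unif (unitCube d) ∂unif (uBox d) := by
          rw [Pmeas, lintegral_prod _ (by
            exact ((ENNReal.measurable_ofReal.comp (hc_meas.comp measurable_fst)).aemeasurable.mul hA_meas))]
      _ ≤ ∫⁻ _u, I ∂unif (uBox d) := by
          apply lintegral_mono_ae
          filter_upwards [hmemBox] with u hu
          rw [lintegral_const_mul' _ _ ENNReal.ofReal_ne_top, hA_inner u hu,
            ← mul_assoc, ← ENNReal.ofReal_mul (by positivity)]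
          have habs : (0:ℝ) < |(Mmat a B u).det| := abs_pos.2 (huBox u hu).1
          rw [inv_mul_cancel₀ habs.ne', ENNReal.ofReal_one, one_mul]
      _ = I := by rw [lintegral_const, measure_univ, mul_one]
      _ < ⊤ := hI_ne.lt_top
  have hQ_int : Integrable
      (fun p : (Fin d → ℝ) × (Fin d → ℝ) => Qt ψ (Mmat a B p.1) p.2 f) (Pmeas d) :=
    ⟨hQ_aesm, hQ_fin⟩
  -- compute the expectation
  rw [show Pmeas d = (unif (uBox d)).prod (unif (unitCube d)) from rfl] at hQ_int ⊢
  rw [integral_prod _ hQ_int]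
  have hinner : ∀ᵐ u ∂unif (uBox d),
      (∫ v, Qt ψ (Mmat a B u) v f ∂unif (unitCube d)) = ∫ x in unitCube d, f x := by
    filter_upwards [hmemBox] with u hu
    have hSne := (huBox u hu).1
    have hTne := (hTdet u hSne).2
    rw [unif_unitCube]
    calc ∫ v in unitCube d, Qt ψ (Mmat a B u) v f
        = ∫ v in unitCube d, |(Mmat a B u).det|⁻¹ *
            (∑' m : Fin d → ℤ, g (((Mmat a B u)ᵀ)⁻¹ *ᵥ (zvec m + v))) := rfl
      _ = |(Mmat a B u).det|⁻¹ *
            ∫ v in unitCube d, (∑' m : Fin d → ℤ, g (((Mmat a B u)ᵀ)⁻¹ *ᵥ (zvec m + v))) :=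
          integral_const_mul _ _
      _ = |(Mmat a B u).det|⁻¹ * (|(((Mmat a B u)ᵀ)⁻¹).det|⁻¹ * ∫ x, g x) := by
          rw [master_integral (((Mmat a B u)ᵀ)⁻¹) hTne hg]
      _ = ∫ x, g x := by
          rw [(hTdet u hSne).1, abs_inv, inv_inv, ← mul_assoc,
            inv_mul_cancel₀ (abs_ne_zero.2 hSne), one_mul]
      _ = ∫ x in unitCube d, f x := hgint
  rw [integral_congr_ae hinner, integral_const, probReal_univ, one_smul]
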